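/- Let μ be the Bernoulli measure on X^ℕ defined by a positive probability vector l, and let g : X^ℕ → X^ℕ be an invertible transformation generated by a strongly connected Mealy automaton A = (X, S, π, λ) with initial state g ∈ S. Then g_*μ = μ if and only if l_{x'} = l_x whenever λ(s, x) = x' for some s ∈ S. -/

import Mathlib

open MeasureTheory Filter Topology
open scoped ENNReal

namespace AutoMarkov

variable {X : Type*} {S : Type*}

/-- The cylinder set of sequences starting with the finite word `w`. -/
def cylinder (w : List X) : Set (ℕ → X) :=
  {ω | ∀ i : Fin w.length, ω i = w.get i}

/-- Product of transition probabilities `L x y₁ * L y₁ y₂ * ⋯` along a word. -/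
noncomputable def chainWeight (L : X → X → ℝ≥0∞) : X → List X → ℝ≥0∞
  | _, [] => 1
  | x, y :: v => L x y * chainWeight L y v

/-- The Markov weight `l_{x₁} L_{x₁x₂} ⋯ L_{x_{n-1}x_n}` of a finite word. -/
noncomputable def cylWeight (l : X → ℝ≥0∞) (L : X → X → ℝ≥0∞) : List X → ℝ≥0∞
  | [] => 1
  | x :: v => l x * chainWeight L x v

/-- The one-sided shift on sequences. -/
def shift : (ℕ → X) → ℕ → X := fun ω n => ω (n + 1)

/-- Extension of the transition function of a Mealy automaton to finite words. -/
def piExt (πf : S → X → S) : S → List X → S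
  | s, [] => s
  | s, x :: w => piExt πf (πf s x) w

/-- Extension of the output function of a Mealy automaton to finite words. -/
def lamExt (πf : S → X → S) (lam : S → X → X) : S → List X → List X
  | _, [] => []
  | s, x :: w => lam s x :: lamExt πf lam (πf s x) w

/-- The action of the state `g` of a Mealy automaton on infinite sequences. -/
def autAct (πf : S → X → S) (lam : S → X → X) (g : S) : (ℕ → X) → ℕ → X :=
  fun ω n => lam (piExt πf g (List.ofFn fun i : Fin n => ω i)) (ω n)

/-- The matrix `T = T_{L,A}` on `S × X`. -/
noncomputable def Tmat [DecidableEq S] (πf : S → X → S) (L : X → X → ℝ≥0∞) :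
    S × X → S × X → ℝ≥0∞ :=
  fun p q => if πf p.1 p.2 = q.1 then L p.2 q.2 else 0

/-- The matrix `K = K_{l,A}` on `S`. -/
noncomputable def Kmat [Fintype X] [DecidableEq S] (πf : S → X → S) (l : X → ℝ≥0∞) :
    S → S → ℝ≥0∞ :=
  fun s₀ s₁ => ∑ x : X, if πf s₀ x = s₁ then l x else 0

/-- The automaton is strongly connected: any state is reachable from any state. -/
def StronglyConnected (πf : S → X → S) : Prop :=
  ∀ s r : S, ∃ w : List X, piExt πf s w = r

/-- The automaton is `L`-strongly connected. -/
def LStronglyConnected (πf : S → X → S) (L : X → X → ℝ≥0∞) : Prop :=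
  ∀ s r : S, ∀ x y : X, ∃ w : List X,
    piExt πf s (x :: w) = r ∧ chainWeight L x (w ++ [y]) ≠ 0

/-- Irreducibility of a stochastic matrix: positive-probability path between any
two symbols. -/
def IrreducibleMat (L : X → X → ℝ≥0∞) : Prop :=
  ∀ x y : X, ∃ v : List X, chainWeight L x (v ++ [y]) ≠ 0

/-- The automaton is reversible: every state has a unique `x`-predecessor. -/
def Reversible (πf : S → X → S) : Prop :=
  ∀ (s : S) (x : X), ∃! s₀ : S, πf s₀ x = s

variable {πf : S → X → S} {lam : S → X → X} {g : S}

lemma lamExt_length (s : S) (w : List X) : (lamExt πf lam s w).length = w.length := by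
  induction w generalizing s with
  | nil => rfl
  | cons x v ih => simp [lamExt, ih]

lemma piExt_append (s : S) (w v : List X) :
    piExt πf s (w ++ v) = piExt πf (piExt πf s w) v := by
  induction w generalizing s with
  | nil => rfl
  | cons x u ih => simp [piExt, ih]

lemma lamExt_append (s : S) (w v : List X) :
    lamExt πf lam s (w ++ v) = lamExt πf lam s w ++ lamExt πf lam (piExt πf s w) v := by
  induction w generalizing s with
  | nil => rfl
  | cons x u ih => simp [lamExt, piExt, ih]

lemma ofFn_eq_ofFn_of_eq (ω : ℕ → X) {m n : ℕ} (h : m = n) :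
    (List.ofFn fun i : Fin m => ω i) = List.ofFn fun i : Fin n => ω i := by subst h; rfl

lemma lamExt_ofFn (ω : ℕ → X) (n : ℕ) :
    lamExt πf lam g (List.ofFn fun i : Fin n => ω i)
      = List.ofFn fun i : Fin n => autAct πf lam g ω i := by
  induction n with
  | zero => rfl
  | succ n ih =>
      have h1 : (List.ofFn fun i : Fin (n+1) => ω i) = (List.ofFn fun i : Fin n => ω i) ++ [ω n] := by
        rw [List.ofFn_succ' fun i : Fin (n+1) => ω i, List.concat_eq_append]
        simp
      have h2 : (List.ofFn fun i : Fin (n+1) => autAct πf lam g ω i)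
          = (List.ofFn fun i : Fin n => autAct πf lam g ω i) ++ [autAct πf lam g ω n] := by
        rw [List.ofFn_succ' fun i : Fin (n+1) => autAct πf lam g ω i, List.concat_eq_append]
        simp
      rw [h1, h2, lamExt_append, ih]
      simp only [List.append_cancel_left_eq]
      simp [lamExt, autAct]

lemma mem_cylinder (w : List X) (ω : ℕ → X) :
    ω ∈ cylinder w ↔ (List.ofFn fun i : Fin w.length => ω i) = w := by
  constructor
  · intro h
    apply List.ext_get (by simp)
    intro n h1 h2
    simpa using h ⟨n, h2⟩
  · intro h i
    obtain ⟨hl, hg⟩ := List.ext_get_iff.mp h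
    have := hg i (by simp) i.2
    simpa using this

lemma mem_cylinder_ofFn {n : ℕ} (f : Fin n → X) (ω : ℕ → X) :
    ω ∈ cylinder (List.ofFn f) ↔ ∀ j : Fin n, ω j = f j := by
  rw [mem_cylinder, ofFn_eq_ofFn_of_eq ω (List.length_ofFn (f := f)), List.ofFn_inj, funext_iff]

lemma ofFn_get_of_length {u : List X} {n : ℕ} (h : u.length = n) :
    (List.ofFn fun i : Fin n => u.get ⟨i.1, h ▸ i.2⟩) = u := by
  subst h
  simpa using List.ofFn_get u

lemma surj_words [Nonempty X] (hsurj : Function.Surjective (autAct πf lam g)) (v : List X) :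
    ∃ u : List X, u.length = v.length ∧ lamExt πf lam g u = v := by
  classical
  set θ : ℕ → X := fun k => if h : k < v.length then v.get ⟨k, h⟩ else Classical.arbitrary X with hθ
  have hθv : θ ∈ cylinder v := fun i => by simp [hθ, i.2]
  obtain ⟨ω, hω⟩ := hsurj θ
  refine ⟨List.ofFn fun i : Fin v.length => ω i, by simp, ?_⟩
  rw [lamExt_ofFn, hω]
  exact (mem_cylinder v θ).mp hθv

noncomputable def wordFn [Nonempty X] (πf : S → X → S) (lam : S → X → X) (g : S)
    (n : ℕ) (φ : Fin n → X) : Fin n → X :=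
  fun i => autAct πf lam g (fun k => if h : k < n then φ ⟨k, h⟩ else Classical.arbitrary X) i

lemma ofFn_wordFn [Nonempty X] (n : ℕ) (φ : Fin n → X) :
    List.ofFn (wordFn πf lam g n φ) = lamExt πf lam g (List.ofFn φ) := by
  have key := lamExt_ofFn (πf := πf) (lam := lam) (g := g)
      (fun k => if h : k < n then φ ⟨k, h⟩ else Classical.arbitrary X) n
  have h : (List.ofFn fun i : Fin n =>
      (fun k => if h : k < n then φ ⟨k, h⟩ else Classical.arbitrary X) i.1) = List.ofFn φ := by
    congr 1
    funext i
    simp [i.2]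
  rw [h] at key
  exact key.symm

lemma wordFn_surj [Fintype X] [Nonempty X] (hsurj : Function.Surjective (autAct πf lam g))
    (n : ℕ) : Function.Surjective (wordFn πf lam g n) := by
  intro ψ
  obtain ⟨u, hlen, hlam⟩ := surj_words hsurj (List.ofFn ψ)
  simp only [List.length_ofFn] at hlen
  refine ⟨fun i : Fin n => u.get ⟨i.1, hlen ▸ i.2⟩, ?_⟩
  refine List.ofFn_inj.mp ?_
  rw [ofFn_wordFn, ofFn_get_of_length hlen, hlam]

lemma wordFn_inj [Fintype X] [Nonempty X] (hsurj : Function.Surjective (autAct πf lam g))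
    (n : ℕ) : Function.Injective (wordFn πf lam g n) :=
  Finite.injective_iff_surjective.mpr (wordFn_surj hsurj n)

lemma inj_words [Fintype X] [Nonempty X] (hsurj : Function.Surjective (autAct πf lam g))
    {u₁ u₂ : List X} (hlen : u₁.length = u₂.length)
    (hl : lamExt πf lam g u₁ = lamExt πf lam g u₂) : u₁ = u₂ := by
  have e₁ : List.ofFn (fun i : Fin u₂.length => u₁.get ⟨i.1, (by rw [hlen]; exact i.2)⟩) = u₁ :=
    ofFn_get_of_length hlen
  have e₂ : List.ofFn (fun i : Fin u₂.length => u₂.get ⟨i.1, i.2⟩) = u₂ :=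
    ofFn_get_of_length rfl
  have h3 : List.ofFn (wordFn πf lam g u₂.length fun i => u₁.get ⟨i.1, (by rw [hlen]; exact i.2)⟩)
      = List.ofFn (wordFn πf lam g u₂.length fun i => u₂.get ⟨i.1, i.2⟩) := by
    rw [ofFn_wordFn, ofFn_wordFn, e₁, e₂, hl]
  have h4 := wordFn_inj hsurj u₂.length (List.ofFn_inj.mp h3)
  exact e₁.symm.trans ((congrArg List.ofFn h4).trans e₂)

lemma preimage_cylinder [Fintype X] [Nonempty X]
    (hsurj : Function.Surjective (autAct πf lam g)) (v : List X) :
    ∃ u : List X, u.length = v.length ∧ lamExt πf lam g u = v ∧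
      autAct πf lam g ⁻¹' cylinder v = cylinder u := by
  obtain ⟨u, hlen, hlam⟩ := surj_words hsurj v
  refine ⟨u, hlen, hlam, ?_⟩
  ext ω
  rw [Set.mem_preimage, mem_cylinder, mem_cylinder]
  constructor
  · intro h
    have h' : lamExt πf lam g (List.ofFn fun i : Fin v.length => ω i) = v :=
      (lamExt_ofFn ω v.length).trans h
    have e : (List.ofFn fun i : Fin v.length => ω i) = u :=
      inj_words hsurj (by simp [hlen]) (h'.trans hlam.symm)
    exact (ofFn_eq_ofFn_of_eq ω hlen).trans e
  · intro h
    have e : (List.ofFn fun i : Fin v.length => ω i) = u :=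
      (ofFn_eq_ofFn_of_eq ω hlen).symm.trans h
    have h' : lamExt πf lam g (List.ofFn fun i : Fin v.length => ω i) = v := by
      rw [e, hlam]
    exact (lamExt_ofFn ω v.length).symm.trans h' 

lemma measurableSet_cylinder [MeasurableSpace X] [MeasurableSingletonClass X] (w : List X) :
    MeasurableSet (cylinder w) := by
  have : cylinder w = ⋂ i : Fin w.length, (fun ω : ℕ → X => ω i.1) ⁻¹' {w.get i} := by
    ext ω; simp [cylinder, Set.mem_iInter]
  rw [this]
  exact MeasurableSet.iInter fun i => (measurable_pi_apply _) (measurableSet_singleton _)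

lemma cylinder_nil : cylinder ([] : List X) = Set.univ := by
  ext ω; simp [cylinder]

lemma isPiSystem_cylinders : IsPiSystem (Set.range (cylinder (X := X))) := by
  rintro _ ⟨w₁, rfl⟩ _ ⟨w₂, rfl⟩ ⟨ω₀, h₁, h₂⟩
  have main : ∀ w w' : List X, w.length ≤ w'.length → ω₀ ∈ cylinder w → ω₀ ∈ cylinder w' →
      cylinder w ∩ cylinder w' = cylinder w' := by
    intro w w' hle hw hw'
    refine Set.inter_eq_right.mpr fun ω hω i => ?_
    have hi : (i : ℕ) < w'.length := lt_of_lt_of_le i.2 hle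
    calc ω i = w'.get ⟨i, hi⟩ := hω ⟨i, hi⟩
      _ = ω₀ i := (hw' ⟨i, hi⟩).symm
      _ = w.get i := hw i
  rcases le_total w₁.length w₂.length with h | h
  · rw [main w₁ w₂ h h₁ h₂]; exact ⟨w₂, rfl⟩
  · rw [Set.inter_comm, main w₂ w₁ h h₂ h₁]; exact ⟨w₁, rfl⟩

lemma eval_preimage [Nonempty X] (i : ℕ) (x : X) :
    (fun ω : ℕ → X => ω i) ⁻¹' {x} = ⋃ u : Fin i → X, cylinder (List.ofFn (Fin.snoc u x)) := by
  ext ω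
  simp only [Set.mem_preimage, Set.mem_singleton_iff, Set.mem_iUnion]
  constructor
  · intro h
    refine ⟨fun j => ω j, ?_⟩
    rw [mem_cylinder_ofFn]
    intro j
    induction j using Fin.lastCases with
    | last => simpa [Fin.snoc_last] using h
    | cast j => simp [Fin.snoc_castSucc]
  · rintro ⟨u, hu⟩
    have := (mem_cylinder_ofFn _ ω).mp hu (Fin.last i)
    simpa [Fin.snoc_last] using this

lemma pi_eq_generateFrom [Fintype X] [MeasurableSpace X] [MeasurableSingletonClass X]
    [Nonempty X] :
    (inferInstance : MeasurableSpace (ℕ → X))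
      = MeasurableSpace.generateFrom (Set.range (cylinder (X := X))) := by
  refine le_antisymm ?_ (MeasurableSpace.generateFrom_le ?_)
  · refine iSup_le fun i => ?_
    refine measurable_iff_comap_le.mp ?_
    refine @measurable_to_countable' X (ℕ → X) _ _
      (MeasurableSpace.generateFrom (Set.range (cylinder (X := X)))) (fun ω => ω i)
      (fun x => ?_)
    rw [eval_preimage i x]
    exact MeasurableSet.iUnion fun u =>
      MeasurableSpace.measurableSet_generateFrom ⟨_, rfl⟩
  · rintro _ ⟨w, rfl⟩
    exact measurableSet_cylinder w

theorem stmt14 [Fintype X] [Fintype S]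
    [MeasurableSpace X] [MeasurableSingletonClass X]
    (l : X → ℝ≥0∞) (hl1 : ∑ x : X, l x = 1) (hlpos : ∀ x, 0 < l x)
    (μ : Measure (ℕ → X)) (hμ : ∀ w : List X, μ (cylinder w) = (w.map l).prod)
    (πf : S → X → S) (lam : S → X → X) (g : S)
    (hconn : StronglyConnected πf)
    (hinv : Function.Bijective (autAct πf lam g))
    (hmeas : Measurable (autAct πf lam g)) :
    Measure.map (autAct πf lam g) μ = μ ↔ ∀ (s : S) (x : X), l (lam s x) = l x := by
  classical
  have hne : Nonempty X := by
    rcases isEmpty_or_nonempty X with h | h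
    · simp at hl1
    · exact h
  have hsurj := hinv.2
  have hle : ∀ x, l x ≤ 1 := fun x =>
    hl1 ▸ Finset.single_le_sum (fun i _ => zero_le) (Finset.mem_univ x)
  have prodP : ∀ w : List X, (w.map l).prod ≠ 0 ∧ (w.map l).prod ≤ 1 := by
    intro w
    induction w with
    | nil => simp
    | cons x v ih =>
        rw [List.map_cons, List.prod_cons]
        exact ⟨mul_ne_zero (hlpos x).ne' ih.1, mul_le_one' (hle x) ih.2⟩
  have hmapcyl : ∀ v u : List X, u.length = v.length → lamExt πf lam g u = v →
      Measure.map (autAct πf lam g) μ (cylinder v) = (u.map l).prod := by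
    intro v u hlen hlam
    obtain ⟨u', hlen', hlam', hpre⟩ := preimage_cylinder hsurj v
    have e : u' = u := inj_words hsurj (hlen'.trans hlen.symm) (hlam'.trans hlam.symm)
    rw [Measure.map_apply hmeas (measurableSet_cylinder v), hpre, e, hμ]
  constructor
  · intro h s x
    have key : ∀ u : List X, ((lamExt πf lam g u).map l).prod = (u.map l).prod := by
      intro u
      have h2 := hmapcyl (lamExt πf lam g u) u (lamExt_length g u).symm rfl
      rw [h, hμ] at h2
      exact h2
    obtain ⟨w, hw⟩ := hconn g s
    have h1 := key (w ++ [x])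
    rw [lamExt_append, hw] at h1
    rw [List.map_append, List.prod_append, List.map_append, List.prod_append, key w] at h1
    simp only [lamExt, List.map_cons, List.map_nil, List.prod_cons, List.prod_nil,
      mul_one] at h1
    exact (ENNReal.mul_right_inj (prodP w).1 ((prodP w).2.trans_lt ENNReal.one_lt_top).ne).mp h1
  · intro h
    have inv_prod : ∀ (s : S) (u : List X),
        ((lamExt πf lam s u).map l).prod = (u.map l).prod := by
      intro s u
      induction u generalizing s with
      | nil => rfl
      | cons x v ih => simp [lamExt, List.map_cons, List.prod_cons, h, ih]
    haveI : IsFiniteMeasure μ := ⟨by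
      rw [← cylinder_nil (X := X), hμ]
      simp⟩
    refine ext_of_generate_finite _ pi_eq_generateFrom isPiSystem_cylinders ?_ ?_
    · rintro _ ⟨v, rfl⟩
      obtain ⟨u, hlen, hlam, _⟩ := preimage_cylinder hsurj v
      rw [hmapcyl v u hlen hlam, hμ, ← hlam, inv_prod]
    · rw [Measure.map_apply hmeas MeasurableSet.univ, Set.preimage_univ]


end AutoMarkov
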